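/- Let M = {M_1, M_2} be a binary MMDP and M^p = {M_1^p, M_2^p} its preprocessed MMDP. For i ∈ {1, 2}, let ISA^p_{tran,i} be the set of state-action pairs (s, a) of M^p that are informative for M^p and satisfy δ_i^p(⊥_i|s, a) > 0. Then for every policy π and each i ∈ {1, 2}, P_i^π({h ∈ H : inf(h) ∩ ISA^p_{tran,i} ≠ ∅}) = 0, where P_i^π is the probability measure on infinite histories induced from s_init by the policy π and the kernel δ_i^p. -/

import Mathlib

/-!
Let `(s, a)` be a pair from which the absorbing state `d` is reached with probability
`p = δ(d|s,a) > 0`, and put `q = 1 - p`. Once in `d`, the pair `(s, a)` is never visited again,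
and every visit of `(s, a)` leads to `d` with probability `p`. Hence the weight equal to
`q ^ (m - #visits)` before absorption, `0` after absorption and `1` after more than `m`
visits has non-increasing expectation along the history process, so that more than `m` visits
within any finite horizon have probability at most `q ^ m`. Letting the horizon and then `m`
tend to infinity, `(s, a)` is visited infinitely often with probability zero. In the
preprocessed MMDP, `⊥_i` is absorbing and pairs at `⊥_j` are not informative, so this applies to
every pair of `ISA^p_{tran,i}`.
-/

open Finset Filter

/-- A history of length `t` of an MDP with states `S` and actions `A`:
a sequence of `t+1` states and `t` actions `(s₀, a₀, s₁, …, a_{t-1}, s_t)`. -/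
abbrev Hist (S A : Type) (t : ℕ) : Type := (Fin (t + 1) → S) × (Fin t → A)

/-- The last state of a history. -/
def lastState {S A : Type} {t : ℕ} (h : Hist S A t) : S := h.1 (Fin.last t)

/-- The length-`τ` prefix of a history of length `t` (for `τ < t`). -/
def prefixH {S A : Type} {t : ℕ} (h : Hist S A t) (τ : Fin t) : Hist S A τ.val :=
  (fun i => h.1 (Fin.castLE (Nat.succ_le_succ τ.isLt.le) i),
   fun i => h.2 (Fin.castLE τ.isLt.le i))

/-- A history-dependent randomized policy over the available-action map `act`:
for every time `t` and history `h` of length `t` it gives a probability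
distribution over the actions available at the last state of `h`. -/
structure Policy (S A : Type) [Fintype S] [Fintype A] (act : S → Finset A) where
  p : (t : ℕ) → Hist S A t → A → ℝ
  nonneg : ∀ (t : ℕ) (h : Hist S A t) (a : A), 0 ≤ p t h a
  sum_one : ∀ (t : ℕ) (h : Hist S A t), ∑ a ∈ act (lastState h), p t h a = 1
  zero_off : ∀ (t : ℕ) (h : Hist S A t), ∀ a ∉ act (lastState h), p t h a = 0

/-- The probability `P^π(h)` of a history `h` of length `t` under the transition kernel `δ`
    and (the underlying map `πf` of) a policy, starting from the initial state `init`. -/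
noncomputable def histProb {S A : Type} [Fintype S] [Fintype A] [DecidableEq S]
    (init : S) (δ : S → A → S → ℝ)
    (πf : (t : ℕ) → Hist S A t → A → ℝ) (t : ℕ) (h : Hist S A t) : ℝ :=
  (if h.1 0 = init then (1 : ℝ) else 0) *
    ∏ τ : Fin t,
      πf τ.val (prefixH h τ) (h.2 τ) * δ (h.1 τ.castSucc) (h.2 τ) (h.1 τ.succ)

/-- The Bhattacharyya coefficient at step `t` between the history distributions induced by
the kernels `δ1` and `δ2` under the policy map `πf`:
`B(t,π) = Σ_{h_t} √(P₁^π(h_t)·P₂^π(h_t))`. -/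
noncomputable def BC {S A : Type} [Fintype S] [Fintype A] [DecidableEq S]
    (init : S) (δ1 δ2 : S → A → S → ℝ)
    (πf : (t : ℕ) → Hist S A t → A → ℝ) (t : ℕ) : ℝ :=
  ∑ h : Hist S A t,
    Real.sqrt (histProb init δ1 πf t h * histProb init δ2 πf t h)

/-- A binary MMDP: two MDPs sharing the state space `S`, available actions `act`,
and initial state `init`, with transition kernels `δ 0` and `δ 1`. -/
structure BinMMDP (S A : Type) [Fintype S] [Fintype A] where
  act : S → Finset A
  act_nonempty : ∀ s, (act s).Nonempty
  init : S
  δ : Fin 2 → S → A → S → ℝ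
  δ_nonneg : ∀ i s a s', 0 ≤ δ i s a s'
  δ_sum : ∀ i s, ∀ a ∈ act s, ∑ s', δ i s a s' = 1

open MeasureTheory in
/-- The space of infinite histories (trajectories) `(s₀, a₀, s₁, a₁, …)`, recorded as the
sequence of state-action pairs, equipped with the product σ-algebra of the discrete
σ-algebras (so that the σ-algebra is generated by the cylinder sets). -/
def Traj (S A : Type) : Type := ℕ → S × A

instance (S A : Type) : MeasurableSpace (Traj S A) :=
  @MeasurableSpace.pi ℕ (fun _ => S × A) (fun _ => ⊤)

/-- The cylinder set of infinite histories extending the finite history `h`. -/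
def Cyl {S A : Type} {t : ℕ} (h : Hist S A t) : Set (Traj S A) :=
  {ω | (∀ i : Fin (t + 1), (ω i.val).1 = h.1 i) ∧ ∀ i : Fin t, (ω i.val).2 = h.2 i}

/-- `inf(ω)`: the set of state-action pairs occurring infinitely often in the infinite
history `ω`. -/
def InfOften {S A : Type} (ω : Traj S A) : Set (S × A) :=
  {p | {n : ℕ | ω n = p}.Infinite}

/-- `P` is the probability measure on infinite histories induced from the initial state
`init` by the transition kernel `δ` and the policy map `πf` (the Ionescu–Tulcea measure):
it is a probability measure whose value on every cylinder set is the probability of the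
corresponding finite history. -/
def IsInduced {S A : Type} [Fintype S] [Fintype A] [DecidableEq S]
    (init : S) (δ : S → A → S → ℝ) (πf : (t : ℕ) → Hist S A t → A → ℝ)
    (P : MeasureTheory.Measure (Traj S A)) : Prop :=
  MeasureTheory.IsProbabilityMeasure P ∧
    ∀ (t : ℕ) (h : Hist S A t),
      P (Cyl h) = ENNReal.ofReal (histProb init δ πf t h)

section Preprocessing

open scoped Classical

variable {S A : Type}

/-- A state-action pair `(s,a)` is revealing for the pair of kernels `δ 0, δ 1` if the
supports of `δ 0 (·|s,a)` and `δ 1 (·|s,a)` are disjoint. -/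
def RevealingPair (δ : Fin 2 → S → A → S → ℝ) (s : S) (a : A) : Prop :=
  ∀ s' : S, ¬(0 < δ 0 s a s' ∧ 0 < δ 1 s a s')

/-- A state-action pair `(s,a)` is informative for the pair of kernels `δ 0, δ 1` if
`δ 0 (·|s,a) ≠ δ 1 (·|s,a)` and their supports intersect. -/
def InformativePair (δ : Fin 2 → S → A → S → ℝ) (s : S) (a : A) : Prop :=
  δ 0 s a ≠ δ 1 s a ∧ ∃ s' : S, 0 < δ 0 s a s' ∧ 0 < δ 1 s a s'

/-- A state is revealing if some available action at it forms a revealing pair. -/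
def RevealingState (act : S → Finset A) (δ : Fin 2 → S → A → S → ℝ) (s : S) : Prop :=
  ∃ a ∈ act s, RevealingPair δ s a

variable [Fintype S] [Fintype A] [DecidableEq S] [DecidableEq A]

/-- Available actions of the preprocessed MMDP.  The state space is `S ⊕ Fin 2`, where
`Sum.inr i` is the terminal state `⊥_{i+1}`; at a revealing state only the chosen revealing
action `ra s` remains, at the terminal state `⊥_j` only the fresh action `a^{⊥_j}`
(encoded `Sum.inr j`) is available, and all other actions are kept. -/
noncomputable def actp (act : S → Finset A) (δ : Fin 2 → S → A → S → ℝ) (ra : S → A) :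
    S ⊕ Fin 2 → Finset (A ⊕ Fin 2)
  | Sum.inl s =>
      if RevealingState act δ s then {Sum.inl (ra s)} else (act s).image Sum.inl
  | Sum.inr j => {Sum.inr j}

/-- The transition kernel `δ_i^p` of the `i`-th preprocessed MDP `M_i^p`:
the terminal states `⊥_j = Sum.inr j` are absorbing; a revealing pair `(s,a)` moves to
`⊥_i` with probability one; an informative pair `(s,a)` keeps the probabilities of
successors in the common support and redirects the remaining mass of `δ i (·|s,a)` to
`⊥_i`; all other transitions are unchanged. -/
noncomputable def δp (δ : Fin 2 → S → A → S → ℝ) (i : Fin 2) :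
    S ⊕ Fin 2 → A ⊕ Fin 2 → S ⊕ Fin 2 → ℝ
  | Sum.inr j, _, s' => if s' = Sum.inr j then 1 else 0
  | Sum.inl s, Sum.inl a, Sum.inl s' =>
      if RevealingPair δ s a then 0
      else if InformativePair δ s a then
        (if 0 < δ (1 - i) s a s' then δ i s a s' else 0)
      else δ i s a s'
  | Sum.inl s, Sum.inl a, Sum.inr j =>
      if RevealingPair δ s a then (if j = i then 1 else 0)
      else if InformativePair δ s a then
        (if j = i then
          ∑ s' ∈ Finset.univ.filter (fun s' : S => ¬ 0 < δ (1 - i) s a s'), δ i s a s'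
        else 0)
      else 0
  | Sum.inl _, Sum.inr _, _ => 0

/-- `ISA^p`: the set of state-action pairs of the preprocessed MMDP that are informative
for the preprocessed MMDP, together with the two terminal pairs `(⊥_j, a^{⊥_j})`. -/
def ISAp (act : S → Finset A) (δ : Fin 2 → S → A → S → ℝ) (ra : S → A) :
    Set ((S ⊕ Fin 2) × (A ⊕ Fin 2)) :=
  {x | x.2 ∈ actp act δ ra x.1 ∧ InformativePair (fun i => δp δ i) x.1 x.2}
    ∪ {x | ∃ j : Fin 2, x = (Sum.inr j, Sum.inr j)}

end Preprocessing

lemma Fin.snoc_castLE {α : Type*} {m n : ℕ} (f : Fin n → α) (x : α) (i : Fin m)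
    (h : m ≤ n) (h' : m ≤ n + 1) :
    Fin.snoc (α := fun _ => α) f x (Fin.castLE h' i) = f (Fin.castLE h i) :=
  Fin.snoc_castSucc (α := fun _ => α) (i := Fin.castLE h i) ..

lemma sum_mul_le_of_le_on_support {ι : Type*} [Fintype ι] {w f : ι → ℝ} {c : ℝ}
    (hw : ∀ i, 0 ≤ w i) (hw1 : ∑ i, w i = 1) (hf : ∀ i, 0 < w i → f i ≤ c) :
    ∑ i, w i * f i ≤ c :=
  calc ∑ i, w i * f i ≤ ∑ i, w i * c := by
        refine Finset.sum_le_sum fun i _ => ?_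
        rcases (hw i).eq_or_lt with hi | hi
        · simp [← hi]
        · exact mul_le_mul_of_nonneg_left (hf i hi) hi.le
    _ = c := by rw [← Finset.sum_mul, hw1, one_mul]

namespace Hist

variable {S A : Type}

def snoc {n : ℕ} (h : Hist S A n) (a : A) (s : S) : Hist S A (n + 1) :=
  (Fin.snoc h.1 s, Fin.snoc h.2 a)

def snocEquiv (S A : Type) (n : ℕ) : Hist S A n × A × S ≃ Hist S A (n + 1) where
  toFun p := p.1.snoc p.2.1 p.2.2
  invFun h := ((Fin.init h.1, Fin.init h.2), h.2 (Fin.last n), h.1 (Fin.last (n + 1)))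
  left_inv p := by simp [snoc]
  right_inv h := by simp [snoc]

lemma sum_succ [Fintype S] [Fintype A] {M : Type*} [AddCommMonoid M] {n : ℕ}
    (f : Hist S A (n + 1) → M) :
    ∑ h', f h' = ∑ h : Hist S A n, ∑ a, ∑ s, f (h.snoc a s) := by
  simp only [← (snocEquiv S A n).sum_comp, Fintype.sum_prod_type]
  rfl

@[simp] lemma lastState_snoc {n : ℕ} (h : Hist S A n) (a : A) (s : S) :
    lastState (h.snoc a s) = s := by
  simp [lastState, snoc]

lemma prefixH_snoc_last {n : ℕ} (h : Hist S A n) (a : A) (s : S) :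
    prefixH (h.snoc a s) (Fin.last n) = h := by
  ext i <;> simp [prefixH, snoc, Fin.snoc_castLE (h := le_rfl)]

lemma prefixH_snoc_castSucc {n : ℕ} (h : Hist S A n) (a : A) (s : S) (τ : Fin n) :
    prefixH (h.snoc a s) τ.castSucc = prefixH h τ := by
  ext i <;> simp [prefixH, snoc, Fin.snoc_castLE]

section Prob

variable [Fintype S] [Fintype A] [DecidableEq S] (init : S) (δ : S → A → S → ℝ)
  (πf : (t : ℕ) → Hist S A t → A → ℝ)

lemma sum_histProb_zero : ∑ h : Hist S A 0, histProb init δ πf 0 h = 1 := by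
  simp only [histProb, Fin.prod_univ_zero, mul_one, Finset.sum_boole, Nat.cast_eq_one]
  refine Finset.card_eq_one.mpr ⟨(fun _ => init, Fin.elim0), ?_⟩
  ext ⟨f, g⟩
  simp [funext_iff, Fin.forall_fin_one, Subsingleton.elim g Fin.elim0]

lemma histProb_snoc {n : ℕ} (h : Hist S A n) (a : A) (s : S) :
    histProb init δ πf (n + 1) (h.snoc a s) =
      histProb init δ πf n h * (πf n h a * δ (lastState h) a s) := by
  simp only [histProb, Fin.prod_univ_castSucc, prefixH_snoc_castSucc, prefixH_snoc_last]
  simp [snoc, lastState, ← Fin.castSucc_succ]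

end Prob

variable [DecidableEq S] [DecidableEq A]

def visits (x : S × A) {n : ℕ} (h : Hist S A n) : ℕ :=
  ∑ τ : Fin n, if (h.1 τ.castSucc, h.2 τ) = x then 1 else 0

lemma visits_snoc (x : S × A) {n : ℕ} (h : Hist S A n) (a : A) (s : S) :
    (h.snoc a s).visits x = h.visits x + if (lastState h, a) = x then 1 else 0 := by
  rw [visits, visits, Fin.sum_univ_castSucc]
  simp only [snoc, lastState, Fin.snoc_castSucc, Fin.snoc_last]
  rfl

end Hist

section Trajectories

variable {S A : Type} [DecidableEq S] [DecidableEq A]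

def trajHist (ω : ℕ → S × A) (n : ℕ) : Hist S A n :=
  (fun i => (ω i).1, fun i => (ω i).2)

lemma visits_trajHist (x : S × A) (ω : ℕ → S × A) (n : ℕ) :
    (trajHist ω n).visits x = Nat.count (ω · = x) n := by
  rw [Nat.count_eq_card_filter_range, Finset.card_filter]
  exact Fin.sum_univ_eq_sum_range (fun t => if ω t = x then 1 else 0) n

lemma monotone_visits_trajHist (ω : ℕ → S × A) (x : S × A) :
    Monotone fun n => (trajHist ω n).visits x := by
  simpa only [visits_trajHist] using Nat.count_monotone _

lemma exists_lt_visits_trajHist {ω : ℕ → S × A} {x : S × A} (hω : {n | ω n = x}.Infinite)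
    (m : ℕ) : ∃ n, m < (trajHist ω n).visits x :=
  ⟨Nat.nth (ω · = x) (m + 1), by simp [visits_trajHist, Nat.count_nth_of_infinite hω]⟩

end Trajectories

namespace Policy

variable {S A : Type} [Fintype S] [Fintype A] {act : S → Finset A} (π : Policy S A act)

lemma sum_univ_eq_one (t : ℕ) (h : Hist S A t) : ∑ a, π.p t h a = 1 := by
  rw [← π.sum_one t h]
  exact (Finset.sum_subset (Finset.subset_univ _) fun a _ ha => π.zero_off t h a ha).symm

lemma mem_act_of_pos {t : ℕ} {h : Hist S A t} {a : A} (ha : 0 < π.p t h a) :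
    a ∈ act (lastState h) := by
  by_contra hna
  exact ha.ne' (π.zero_off t h a hna)

lemma histProb_nonneg [DecidableEq S] (init : S) {δ : S → A → S → ℝ}
    (hδ0 : ∀ s a s', 0 ≤ δ s a s') (n : ℕ) (h : Hist S A n) :
    0 ≤ histProb init δ π.p n h :=
  mul_nonneg (by split_ifs <;> norm_num)
    (Finset.prod_nonneg fun _ _ => mul_nonneg (π.nonneg ..) (hδ0 ..))

end Policy

structure IsKernel {S A : Type} [Fintype S] (act : S → Finset A) (δ : S → A → S → ℝ) :
    Prop where
  nonneg : ∀ s a s', 0 ≤ δ s a s'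
  sum_eq_one : ∀ s, ∀ a ∈ act s, ∑ s', δ s a s' = 1

lemma IsKernel.le_one {S A : Type} [Fintype S] {act : S → Finset A} {δ : S → A → S → ℝ}
    (hδ : IsKernel act δ) {s : S} {a : A} (ha : a ∈ act s) (s' : S) : δ s a s' ≤ 1 :=
  hδ.sum_eq_one s a ha ▸
    Finset.single_le_sum (f := δ s a) (fun _ _ => hδ.nonneg s a _) (Finset.mem_univ s')

section VisitWeight

variable {S A : Type} [DecidableEq S]

def visitWeight (d : S) (p : ℝ) (m w : ℕ) (s : S) : ℝ :=
  if m < w then 1 else if s = d then 0 else (1 - p) ^ (m - w)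

lemma visitWeight_nonneg {d : S} {p : ℝ} (hp : p ≤ 1) (m w : ℕ) (s : S) :
    0 ≤ visitWeight d p m w s := by
  have : 0 ≤ 1 - p := sub_nonneg.2 hp
  unfold visitWeight
  split_ifs <;> positivity

variable [Fintype S] {act : S → Finset A} {δ : S → A → S → ℝ} {d s : S} {a : A}

lemma sum_mul_visitWeight_succ (hδ : IsKernel act δ) (ha : a ∈ act s) (hs : s ≠ d)
    {m w : ℕ} (hw : w < m) :
    ∑ s', δ s a s' * visitWeight d (δ s a d) m (w + 1) s' = visitWeight d (δ s a d) m w s := by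
  have hweight (s' : S) : visitWeight d (δ s a d) m (w + 1) s' =
      (1 - δ s a d) ^ (m - w - 1) - if s' = d then (1 - δ s a d) ^ (m - w - 1) else 0 := by
    simp only [visitWeight, if_neg (show ¬ m < w + 1 by omega)]
    split_ifs <;> simp [Nat.sub_sub]
  simp only [hweight, mul_sub, mul_ite, mul_zero, Finset.sum_sub_distrib, ← Finset.sum_mul,
    hδ.sum_eq_one s a ha, Finset.sum_ite_eq', Finset.mem_univ, if_true]
  rw [visitWeight, if_neg hw.not_gt, if_neg hs, ← sub_mul, ← pow_succ',
    show m - w - 1 + 1 = m - w by omega]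

lemma sum_mul_visitWeight_le [DecidableEq A] (hδ : IsKernel act δ)
    (hd : ∀ a s', s' ≠ d → δ d a s' = 0) (hs : s ≠ d) (ha : a ∈ act s) (m w : ℕ) {t : S}
    {b : A} (hb : b ∈ act t) :
    ∑ s', δ t b s' *
        visitWeight d (δ s a d) m (w + if (t, b) = (s, a) then 1 else 0) s' ≤
      visitWeight d (δ s a d) m w t := by
  have avg {f : S → ℝ} {c : ℝ} (hf : ∀ s', 0 < δ t b s' → f s' ≤ c) :
      ∑ s', δ t b s' * f s' ≤ c :=
    sum_mul_le_of_le_on_support (hδ.nonneg t b) (hδ.sum_eq_one t b hb) hf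
  by_cases hw : m < w
  · simp only [visitWeight, if_pos hw, if_pos (hw.trans_le (Nat.le_add_right _ _))]
    exact avg fun _ _ => le_rfl
  by_cases htd : t = d
  · subst htd
    rw [if_neg fun h => hs (congrArg Prod.fst h).symm, add_zero]
    refine avg fun s' hs' => ?_
    have : s' = t := by_contra fun h => hs'.ne' (hd b s' h)
    simp [visitWeight, hw, this]
  by_cases hvisit : (t, b) = (s, a)
  · obtain ⟨rfl, rfl⟩ := Prod.mk.inj hvisit
    rw [if_pos rfl]
    rcases (not_lt.1 hw).lt_or_eq with hlt | rfl
    · exact (sum_mul_visitWeight_succ hδ hb htd hlt).le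
    · simp only [visitWeight, lt_add_iff_pos_right, zero_lt_one, if_true, if_neg htd,
        Nat.sub_self, pow_zero, lt_irrefl, if_false]
      exact avg fun _ _ => le_rfl
  · rw [if_neg hvisit, add_zero]
    refine avg fun s' _ => ?_
    simp only [visitWeight, if_neg hw, if_neg htd]
    split_ifs
    · exact pow_nonneg (sub_nonneg.2 (hδ.le_one ha d)) _
    · exact le_rfl

end VisitWeight

section VisitBound

variable {S A : Type} [Fintype S] [Fintype A] [DecidableEq S] [DecidableEq A]
  {act : S → Finset A} (init : S) {δ : S → A → S → ℝ} (π : Policy S A act) {d s : S} {a : A}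

lemma sum_histProb_mul_visitWeight_le (hδ : IsKernel act δ)
    (hd : ∀ a s', s' ≠ d → δ d a s' = 0) (hs : s ≠ d) (ha : a ∈ act s) (m n : ℕ) :
    ∑ h : Hist S A n, histProb init δ π.p n h *
      visitWeight d (δ s a d) m (h.visits (s, a)) (lastState h) ≤ (1 - δ s a d) ^ m := by
  induction n with
  | zero =>
    refine sum_mul_le_of_le_on_support (π.histProb_nonneg init hδ.nonneg 0)
      (Hist.sum_histProb_zero init δ π.p) fun h _ => ?_
    simp only [Hist.visits, Finset.univ_eq_empty, Finset.sum_empty, visitWeight,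
      Nat.not_lt_zero, if_false, Nat.sub_zero]
    split_ifs
    exacts [pow_nonneg (sub_nonneg.2 (hδ.le_one ha d)) m, le_rfl]
  | succ n ih =>
    refine le_trans ?_ ih
    rw [Hist.sum_succ]
    refine Finset.sum_le_sum fun h _ => ?_
    simp only [Hist.histProb_snoc, Hist.visits_snoc, Hist.lastState_snoc, mul_assoc,
      ← Finset.mul_sum]
    refine mul_le_mul_of_nonneg_left ?_ (π.histProb_nonneg init hδ.nonneg n h)
    exact sum_mul_le_of_le_on_support (π.nonneg n h) (π.sum_univ_eq_one n h)
      fun b hb => sum_mul_visitWeight_le hδ hd hs ha m _ (π.mem_act_of_pos hb)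

lemma sum_histProb_visits_gt_le (hδ : IsKernel act δ) (hd : ∀ a s', s' ≠ d → δ d a s' = 0)
    (hs : s ≠ d) (ha : a ∈ act s) (m n : ℕ) :
    ∑ h ∈ {h : Hist S A n | m < h.visits (s, a)}, histProb init δ π.p n h ≤
      (1 - δ s a d) ^ m :=
  calc ∑ h ∈ {h : Hist S A n | m < h.visits (s, a)}, histProb init δ π.p n h
      = ∑ h ∈ {h : Hist S A n | m < h.visits (s, a)}, histProb init δ π.p n h *
          visitWeight d (δ s a d) m (h.visits (s, a)) (lastState h) :=
        Finset.sum_congr rfl fun h hh => by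
          rw [visitWeight, if_pos (Finset.mem_filter.1 hh).2, mul_one]
    _ ≤ ∑ h, histProb init δ π.p n h *
          visitWeight d (δ s a d) m (h.visits (s, a)) (lastState h) :=
        Finset.sum_le_sum_of_subset_of_nonneg (Finset.filter_subset _ _) fun h _ _ =>
          mul_nonneg (π.histProb_nonneg init hδ.nonneg n h)
            (visitWeight_nonneg (hδ.le_one ha d) ..)
    _ ≤ (1 - δ s a d) ^ m := sum_histProb_mul_visitWeight_le init π hδ hd hs ha m n

open MeasureTheory in
lemma measure_visits_gt_le (hδ : IsKernel act δ) (hd : ∀ a s', s' ≠ d → δ d a s' = 0)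
    (hs : s ≠ d) (ha : a ∈ act s) {P : Measure (Traj S A)} (hP : IsInduced init δ π.p P)
    (m n : ℕ) :
    P {ω | m < (trajHist ω n).visits (s, a)} ≤ ENNReal.ofReal ((1 - δ s a d) ^ m) :=
  calc P {ω | m < (trajHist ω n).visits (s, a)}
      ≤ P (⋃ h ∈ ({h | m < h.visits (s, a)} : Finset (Hist S A n)), Cyl h) :=
        measure_mono fun ω hω => Set.mem_biUnion (x := trajHist ω n)
          (Finset.mem_filter.2 ⟨Finset.mem_univ _, hω⟩) ⟨fun _ => rfl, fun _ => rfl⟩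
    _ ≤ ∑ h ∈ {h : Hist S A n | m < h.visits (s, a)}, P (Cyl h) :=
        measure_biUnion_finset_le _ _
    _ = ENNReal.ofReal
          (∑ h ∈ {h : Hist S A n | m < h.visits (s, a)}, histProb init δ π.p n h) := by
        rw [ENNReal.ofReal_sum_of_nonneg fun h _ => π.histProb_nonneg init hδ.nonneg n h]
        exact Finset.sum_congr rfl fun h _ => hP.2 n h
    _ ≤ ENNReal.ofReal ((1 - δ s a d) ^ m) :=
        ENNReal.ofReal_le_ofReal (sum_histProb_visits_gt_le init π hδ hd hs ha m n)

open MeasureTheory in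
lemma measure_mem_infOften_eq_zero_of_absorbing (hδ : IsKernel act δ)
    (hd : ∀ a s', s' ≠ d → δ d a s' = 0) (hs : s ≠ d) (ha : a ∈ act s) (hpos : 0 < δ s a d)
    {P : Measure (Traj S A)} (hP : IsInduced init δ π.p P) :
    P {ω | (s, a) ∈ InfOften ω} = 0 := by
  have hbound (m : ℕ) : P {ω | (s, a) ∈ InfOften ω} ≤ ENNReal.ofReal ((1 - δ s a d) ^ m) :=
    calc P {ω | (s, a) ∈ InfOften ω}
        ≤ P (⋃ n, {ω | m < (trajHist ω n).visits (s, a)}) :=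
          measure_mono fun ω hω => Set.mem_iUnion.2 (exists_lt_visits_trajHist hω m)
      _ = ⨆ n, P {ω | m < (trajHist ω n).visits (s, a)} :=
          Monotone.measure_iUnion fun n n' hn ω hω =>
            hω.trans_le (monotone_visits_trajHist ω (s, a) hn)
      _ ≤ ENNReal.ofReal ((1 - δ s a d) ^ m) :=
          iSup_le (measure_visits_gt_le init π hδ hd hs ha hP m)
  have hlim : Filter.Tendsto (fun m => ENNReal.ofReal ((1 - δ s a d) ^ m)) Filter.atTop
      (nhds 0) := by
    simpa using ENNReal.tendsto_ofReal (tendsto_pow_atTop_nhds_zero_of_lt_one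
      (sub_nonneg.2 (hδ.le_one ha d)) (by linarith))
  exact nonpos_iff_eq_zero.1 (ge_of_tendsto' hlim hbound)

end VisitBound

section Preprocessed

variable {S A : Type} {δ : Fin 2 → S → A → S → ℝ}

lemma exists_eq_inl_of_mem_actp [DecidableEq A] {act : S → Finset A} {ra : S → A}
    (hra : ∀ s, RevealingState act δ s → ra s ∈ act s ∧ RevealingPair δ s (ra s)) {s : S}
    {b : A ⊕ Fin 2} (hb : b ∈ actp act δ ra (.inl s)) : ∃ a ∈ act s, b = .inl a := by
  simp only [actp] at hb
  split_ifs at hb with hrev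
  · exact ⟨ra s, (hra s hrev).1, Finset.mem_singleton.1 hb⟩
  · obtain ⟨a, ha, rfl⟩ := Finset.mem_image.1 hb
    exact ⟨a, ha, rfl⟩

variable [Fintype S] [DecidableEq S]

lemma δp_nonneg (hδ0 : ∀ i s a s', 0 ≤ δ i s a s') (i : Fin 2) (s : S ⊕ Fin 2)
    (a : A ⊕ Fin 2) (s' : S ⊕ Fin 2) : 0 ≤ δp δ i s a s' := by
  unfold δp
  split <;> (try split_ifs) <;>
    first | positivity | exact hδ0 .. | exact Finset.sum_nonneg fun _ _ => hδ0 ..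

lemma δp_inr_of_ne (i j : Fin 2) (a : A ⊕ Fin 2) {s' : S ⊕ Fin 2} (hs' : s' ≠ .inr j) :
    δp δ i (.inr j) a s' = 0 := by
  simp [δp, hs']

lemma not_informativePair_δp_inr (j : Fin 2) (a : A ⊕ Fin 2) :
    ¬ InformativePair (fun k => δp δ k) (.inr j) a :=
  fun h => h.1 rfl

variable {act : S → Finset A}

lemma sum_δp_inl (hδ1 : ∀ i s, ∀ a ∈ act s, ∑ s', δ i s a s' = 1) (i : Fin 2) {s : S}
    {a : A} (ha : a ∈ act s) : ∑ s', δp δ i (.inl s) (.inl a) s' = 1 := by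
  rw [Fintype.sum_sum_type]
  by_cases hrev : RevealingPair δ s a
  · simp [δp, hrev]
  by_cases hinf : InformativePair δ s a
  · simp only [δp, hrev, hinf, if_false, if_true, Finset.sum_ite_eq', Finset.mem_univ]
    rw [← Finset.sum_filter, Finset.sum_filter_add_sum_filter_not, hδ1 i s a ha]
  · simp [δp, hrev, hinf, hδ1 i s a ha]

lemma isKernel_δp [DecidableEq A] {ra : S → A} (hδ0 : ∀ i s a s', 0 ≤ δ i s a s')
    (hδ1 : ∀ i s, ∀ a ∈ act s, ∑ s', δ i s a s' = 1)
    (hra : ∀ s, RevealingState act δ s → ra s ∈ act s ∧ RevealingPair δ s (ra s))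
    (i : Fin 2) : IsKernel (actp act δ ra) (δp δ i) where
  nonneg := δp_nonneg hδ0 i
  sum_eq_one
    | .inl _, _, hb => by
      obtain ⟨a, ha, rfl⟩ := exists_eq_inl_of_mem_actp hra hb
      exact sum_δp_inl hδ1 i ha
    | .inr _, _, _ => by simp [δp]

end Preprocessed

theorem induced_measure_infOften_transient_eq_zero_general
    {S A : Type} [Fintype S] [Fintype A] [DecidableEq S] [DecidableEq A]
    (act : S → Finset A) (init : S)
    (δ : Fin 2 → S → A → S → ℝ)
    (hδ0 : ∀ i s a s', 0 ≤ δ i s a s')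
    (hδ1 : ∀ i s, ∀ a ∈ act s, ∑ s', δ i s a s' = 1)
    (ra : S → A)
    (hra : ∀ s, RevealingState act δ s → ra s ∈ act s ∧ RevealingPair δ s (ra s))
    (i : Fin 2)
    (π : Policy (S ⊕ Fin 2) (A ⊕ Fin 2) (actp act δ ra))
    (P : MeasureTheory.Measure (Traj (S ⊕ Fin 2) (A ⊕ Fin 2)))
    (hP : IsInduced (Sum.inl init) (δp δ i) π.p P) :
    P {ω | (InfOften ω ∩
        {x : (S ⊕ Fin 2) × (A ⊕ Fin 2) |
          x.2 ∈ actp act δ ra x.1 ∧ InformativePair (fun k => δp δ k) x.1 x.2 ∧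
            0 < δp δ i x.1 x.2 (Sum.inr i)}).Nonempty} = 0 := by
  refine MeasureTheory.measure_mono_null (fun ω ⟨x, hxω, hx⟩ => Set.mem_biUnion hx hxω)
    ((MeasureTheory.measure_biUnion_null_iff (Set.to_countable _)).2 ?_)
  rintro ⟨s | j, b⟩ ⟨hb, hinf, hpos⟩
  · exact measure_mem_infOften_eq_zero_of_absorbing (.inl init) π
      (isKernel_δp hδ0 hδ1 hra i) (fun _ _ => δp_inr_of_ne i i _) Sum.inl_ne_inr hb hpos hP
  · exact absurd hinf (not_informativePair_δp_inr j b)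

/-- **Finitely often visited transient informative state-action pairs.**
Let `M` be a binary MMDP given by `(act, init, δ 0, δ 1)` and `M^p` its preprocessed MMDP
(with chosen revealing actions `ra`).  For `i ∈ {1,2}`, `ISA^p_{tran,i}` is the set of
state-action pairs of `M^p` that are informative for `M^p` and have
`δ_i^p(⊥_i|s,a) > 0`.  Then for every policy `π` and the measure `P_i^π` on infinite
histories induced from `s_init` by `π` and `δ_i^p`,
`P_i^π({h : inf(h) ∩ ISA^p_{tran,i} ≠ ∅}) = 0`. -/
theorem induced_measure_infOften_transient_eq_zero
    {S A : Type} [Fintype S] [Fintype A] [DecidableEq S] [DecidableEq A]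
    (act : S → Finset A) (hact : ∀ s, (act s).Nonempty) (init : S)
    (δ : Fin 2 → S → A → S → ℝ)
    (hδ0 : ∀ i s a s', 0 ≤ δ i s a s')
    (hδ1 : ∀ i s, ∀ a ∈ act s, ∑ s', δ i s a s' = 1)
    (ra : S → A)
    (hra : ∀ s, RevealingState act δ s → ra s ∈ act s ∧ RevealingPair δ s (ra s))
    (i : Fin 2)
    (π : Policy (S ⊕ Fin 2) (A ⊕ Fin 2) (actp act δ ra))
    (P : MeasureTheory.Measure (Traj (S ⊕ Fin 2) (A ⊕ Fin 2)))
    (hP : IsInduced (Sum.inl init) (δp δ i) π.p P) :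
    P {ω | (InfOften ω ∩
        {x : (S ⊕ Fin 2) × (A ⊕ Fin 2) |
          x.2 ∈ actp act δ ra x.1 ∧ InformativePair (fun k => δp δ k) x.1 x.2 ∧
            0 < δp δ i x.1 x.2 (Sum.inr i)}).Nonempty} = 0 :=
  induced_measure_infOften_transient_eq_zero_general act init δ hδ0 hδ1 ra hra i π P hP
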